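/- Let G be a finite simple graph, r, c, k natural numbers with c ≥ 1, and U ⊆ V(G) a solution core for (r,c)-scattering, i.e. some maximum-size (r,c)-scattered set of G is contained in U. Let Ĝ be an induced subgraph of G with U ⊆ V(Ĝ) such that: (1) for all u, v ∈ U and all d ≤ r, u is within distance d of v in G if and only if u is within distance d of v in Ĝ; and (2) for every function ν : U → {1,…,r} ∪ {∞} realized as π^r_{G,U}[x] by some vertex x ∈ V(G) ∖ U, there is a vertex x' ∈ V(Ĝ) ∖ U with π^r_{Ĝ,U}[x'] = ν. Then G has an (r,c)-scattered set of size at least k if and only if there is a set I ⊆ U of size at least k with |N^r_{Ĝ}[v] ∩ I| ≤ c for every vertex v of Ĝ. -/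

import Mathlib

/-- The closed `d`-neighbourhood of `v` in the subgraph of `G` induced on `S`:
vertices reachable from `v` by a walk of length at most `d` all of whose vertices lie
in `S`.  With `S = Set.univ` this is the closed `d`-neighbourhood in `G` itself. -/
def ballIn {V : Type*} (G : SimpleGraph V) (S : Set V) (d : ℕ) (v : V) : Set V :=
  {u : V | ∃ w : G.Walk u v, w.length ≤ d ∧ ∀ x ∈ w.support, x ∈ S}

/-- The `r`-projection profile `π^r_{H,X}[u]` evaluated at `v`, where `H` is the
subgraph of `G` induced on `S`: the minimum length of an `X`-avoiding walk from `u`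
to `v` inside `S` if that minimum is at most `r`, and `∞` otherwise.  (`X`-avoiding
means no internal vertex lies in `X`.)  With `S = Set.univ` this is the profile in
`G` itself. -/
noncomputable def profileIn {V : Type*} (G : SimpleGraph V) (S X : Set V) (r : ℕ)
    (u v : V) : ℕ∞ :=
  let d := sInf {n : ℕ∞ | ∃ w : G.Walk u v, (∀ x ∈ w.support, x ∈ S) ∧
    (∀ x ∈ w.support.tail.dropLast, x ∉ X) ∧ (w.length : ℕ∞) = n}
  if d ≤ (r : ℕ∞) then d else ⊤

/-!
A maximum scattered set may be taken inside the core `U`, so only sets `I ⊆ U` matter, and for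
those it suffices that every `r`-ball of `G` meets `U` inside some `r`-ball of `Ĝ`.  Balls around
vertices of `U` are handled by (1).  For `v ∉ U`, a walk of length `≤ r` from `v` to `u ∈ U`
splits at its first vertex `u₁ ∈ U` into a `U`-avoiding part, whose length bounds the profile of
`v` at `u₁`, and a rest between vertices of `U`.  The vertex `x'` of `Ĝ` with the same profile
reaches `u₁` in `Ĝ` as fast, and (1) lets `Ĝ` reach `u` from `u₁` as fast as `G` does.
-/

open SimpleGraph

section

variable {V : Type*} {G : SimpleGraph V}

lemma SimpleGraph.Walk.exists_split_at_first_mem (U : Set V) {a b : V} (w : G.Walk a b)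
    (hb : b ∈ U) (ha : a ∉ U) :
    ∃ u ∈ U, ∃ (p : G.Walk a u) (q : G.Walk u b),
      p.length + q.length = w.length ∧ ∀ x ∈ p.support.dropLast, x ∉ U := by
  induction w with
  | nil => exact absurd hb ha
  | @cons a a' b hadj w ih =>
    by_cases ha' : a' ∈ U
    · refine ⟨a', ha', cons hadj nil, w, by simp [Nat.add_comm], ?_⟩
      simpa using ha
    · obtain ⟨u, hu, p, q, hlen, hp⟩ := ih hb ha'
      refine ⟨u, hu, cons hadj p, q, by simp [← hlen]; ring, ?_⟩
      rw [support_cons, ← p.cons_tail_support, List.dropLast_cons_cons, List.forall_mem_cons,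
        p.cons_tail_support]
      exact ⟨ha, hp⟩

variable {S T U X : Set V} {r : ℕ} {u v : V}

lemma ballIn_mono (hST : S ⊆ T) (d : ℕ) : ballIn G S d v ⊆ ballIn G T d v :=
  fun _ ⟨w, hlen, hS⟩ => ⟨w, hlen, fun x hx => hST (hS x hx)⟩

lemma profileIn_le_of_walk (w : G.Walk u v) (hS : ∀ x ∈ w.support, x ∈ S)
    (hX : ∀ x ∈ w.support.tail.dropLast, x ∉ X) (hlen : w.length ≤ r) :
    profileIn G S X r u v ≤ w.length := by
  dsimp only [profileIn]
  split_ifs with hd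
  · exact sInf_le ⟨w, hS, hX, rfl⟩
  · refine absurd ((sInf_le ?_).trans (Nat.cast_le.mpr hlen)) hd
    exact ⟨w, hS, hX, rfl⟩

lemma exists_walk_of_profileIn_le {m : ℕ} (h : profileIn G S X r u v ≤ m) :
    ∃ w : G.Walk u v, w.length ≤ m ∧ ∀ x ∈ w.support, x ∈ S := by
  dsimp only [profileIn] at h
  split_ifs at h
  · obtain ⟨_, ⟨w, hS, -, rfl⟩, hlt⟩ :=
      sInf_lt_iff.mp (h.trans_lt (ENat.natCast_lt_natCast.mpr m.lt_succ_self))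
    exact ⟨w, Nat.lt_succ_iff.mp (ENat.natCast_lt_natCast.mp hlt), hS⟩
  · exact absurd h (by simp)

lemma ballIn_univ_inter_subset_of_mem
    (hdist : ∀ u ∈ U, ∀ v ∈ U, ∀ d ≤ r, (∃ w : G.Walk u v, w.length ≤ d) →
      ∃ w : G.Walk u v, w.length ≤ d ∧ ∀ x ∈ w.support, x ∈ S)
    (hv : v ∈ U) :
    ballIn G Set.univ r v ∩ U ⊆ ballIn G S r v :=
  fun u ⟨⟨w, hlen, _⟩, hu⟩ => hdist u hu v hv r le_rfl ⟨w, hlen⟩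

lemma ballIn_univ_inter_subset_of_profileIn_eq
    (hdist : ∀ u ∈ U, ∀ v ∈ U, ∀ d ≤ r, (∃ w : G.Walk u v, w.length ≤ d) →
      ∃ w : G.Walk u v, w.length ≤ d ∧ ∀ x ∈ w.support, x ∈ S)
    {x' : V} (hv : v ∉ U)
    (hprofile : ∀ u ∈ U, profileIn G S U r x' u = profileIn G Set.univ U r v u) :
    ballIn G Set.univ r v ∩ U ⊆ ballIn G S r x' := by
  rintro u ⟨⟨w, hlen, -⟩, hu⟩
  obtain ⟨u₁, hu₁, p, q, hsum, hp⟩ := w.reverse.exists_split_at_first_mem U hu hv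
  rw [Walk.length_reverse] at hsum
  have hp_internal : ∀ x ∈ p.support.tail.dropLast, x ∉ U := fun x hx =>
    hp x (List.mem_of_mem_tail (List.tail_dropLast ▸ hx))
  have hprofile_le : profileIn G S U r x' u₁ ≤ p.length := hprofile u₁ hu₁ ▸
    profileIn_le_of_walk p (fun _ _ => trivial) hp_internal (by omega)
  obtain ⟨p', hp'len, hp'S⟩ := exists_walk_of_profileIn_le hprofile_le
  obtain ⟨q', hq'len, hq'S⟩ := hdist u₁ hu₁ u hu (r - p.length) (Nat.sub_le _ _) ⟨q, by omega⟩
  refine ⟨q'.reverse.append p'.reverse, ?_, fun x hx => ?_⟩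
  · simp only [Walk.length_append, Walk.length_reverse]
    omega
  · rcases Walk.mem_support_append_iff _ _ |>.mp hx with hx | hx
    · exact hq'S x (by simpa using hx)
    · exact hp'S x (by simpa using hx)

end

theorem rc_scattered_projection_kernel_general {V : Type*} [Fintype V]
    (G : SimpleGraph V) (r c k : ℕ) (U S : Set V) (hUS : U ⊆ S)
    (hcore : ∃ I₀ : Set V, I₀ ⊆ U ∧
      (∀ v : V, (ballIn G Set.univ r v ∩ I₀).ncard ≤ c) ∧
      (∀ I : Set V, (∀ v : V, (ballIn G Set.univ r v ∩ I).ncard ≤ c) →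
        I.ncard ≤ I₀.ncard))
    (h1 : ∀ u ∈ U, ∀ v ∈ U, ∀ d ≤ r,
      ((∃ w : G.Walk u v, w.length ≤ d) ↔
       (∃ w : G.Walk u v, w.length ≤ d ∧ ∀ x ∈ w.support, x ∈ S)))
    (h2 : ∀ x : V, x ∉ U → ∃ x' ∈ S, x' ∉ U ∧
      ∀ v ∈ U, profileIn G S U r x' v = profileIn G Set.univ U r x v) :
    (∃ I : Set V, k ≤ I.ncard ∧
        ∀ v : V, (ballIn G Set.univ r v ∩ I).ncard ≤ c) ↔
    (∃ I : Set V, I ⊆ U ∧ k ≤ I.ncard ∧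
        ∀ v ∈ S, (ballIn G S r v ∩ I).ncard ≤ c) := by
  have hdist := fun u hu v hv d hd => (h1 u hu v hv d hd).mp
  constructor
  · rintro ⟨I, hk, hI⟩
    obtain ⟨I₀, hI₀U, hI₀, hmax⟩ := hcore
    refine ⟨I₀, hI₀U, hk.trans (hmax I hI), fun v _ => (Set.ncard_le_ncard ?_).trans (hI₀ v)⟩
    exact Set.inter_subset_inter_left _ (ballIn_mono (Set.subset_univ S) r)
  · rintro ⟨I, hIU, hk, hI⟩
    refine ⟨I, hk, fun v => ?_⟩
    obtain ⟨x', hx'S, hball⟩ : ∃ x' ∈ S, ballIn G Set.univ r v ∩ U ⊆ ballIn G S r x' := by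
      by_cases hv : v ∈ U
      · exact ⟨v, hUS hv, ballIn_univ_inter_subset_of_mem hdist hv⟩
      · obtain ⟨x', hx'S, -, hprofile⟩ := h2 v hv
        exact ⟨x', hx'S, ballIn_univ_inter_subset_of_profileIn_eq hdist hv hprofile⟩
    calc (ballIn G Set.univ r v ∩ I).ncard
        ≤ (ballIn G S r x' ∩ I).ncard :=
          Set.ncard_le_ncard fun u ⟨hu, huI⟩ => ⟨hball ⟨hu, hIU huI⟩, huI⟩
      _ ≤ c := hI x' hx'S

/-- Let `U` be a solution core for `(r,c)`-scattering in `G` (some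
maximum-size `(r,c)`-scattered set of `G` lies inside `U`) and let `Ĝ` be the subgraph
of `G` induced on `S ⊇ U` such that (1) distances up to `r` between vertices of `U`
agree in `G` and `Ĝ`, and (2) every `r`-projection profile onto `U` realized in `G` by
some vertex of `V(G) ∖ U` is realized in `Ĝ` by some vertex of `V(Ĝ) ∖ U`.  Then `G`
has an `(r,c)`-scattered set of size at least `k` iff there is `I ⊆ U` of size at
least `k` with `|N^r_Ĝ[v] ∩ I| ≤ c` for every vertex `v` of `Ĝ`. -/
theorem rc_scattered_projection_kernel {V : Type*} [Fintype V]
    (G : SimpleGraph V) (r c k : ℕ) (hc : 1 ≤ c) (U S : Set V) (hUS : U ⊆ S)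
    (hcore : ∃ I₀ : Set V, I₀ ⊆ U ∧
      (∀ v : V, (ballIn G Set.univ r v ∩ I₀).ncard ≤ c) ∧
      (∀ I : Set V, (∀ v : V, (ballIn G Set.univ r v ∩ I).ncard ≤ c) →
        I.ncard ≤ I₀.ncard))
    (h1 : ∀ u ∈ U, ∀ v ∈ U, ∀ d ≤ r,
      ((∃ w : G.Walk u v, w.length ≤ d) ↔
       (∃ w : G.Walk u v, w.length ≤ d ∧ ∀ x ∈ w.support, x ∈ S)))
    (h2 : ∀ x : V, x ∉ U → ∃ x' ∈ S, x' ∉ U ∧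
      ∀ v ∈ U, profileIn G S U r x' v = profileIn G Set.univ U r x v) :
    (∃ I : Set V, k ≤ I.ncard ∧
        ∀ v : V, (ballIn G Set.univ r v ∩ I).ncard ≤ c) ↔
    (∃ I : Set V, I ⊆ U ∧ k ≤ I.ncard ∧
        ∀ v ∈ S, (ballIn G S r v ∩ I).ncard ≤ c) :=
  rc_scattered_projection_kernel_general G r c k U S hUS hcore h1 h2
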